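/- Let K be a real Hilbert space, V : K → K linear continuous self-adjoint and ρ-strongly positive, and M : K ⇉ K maximally monotone with respect to the original inner product. Then V^{-1} ∘ M is maximally monotone with respect to the inner product ⟨x, y⟩_V = ⟨x, Vy⟩ on K. -/
import Mathlib


open RealInnerProductSpace

section
variable {K : Type*} [NormedAddCommGroup K] [InnerProductSpace ℝ K]

/-- A set-valued operator is monotone. -/
def MonotoneOp (M : K → Set K) : Prop :=
  ∀ x y u v : K, u ∈ M x → v ∈ M y → 0 ≤ ⟪x - y, u - v⟫

/-- A set-valued operator is maximally monotone. -/
def MaximallyMonotoneOp (M : K → Set K) : Prop :=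
  MonotoneOp M ∧ ∀ x u : K, (∀ y v : K, v ∈ M y → 0 ≤ ⟪x - y, u - v⟫) → u ∈ M x

end

/-- If `V` is linear continuous, self-adjoint and `ρ`-strongly positive with
inverse `W = V⁻¹`, and `M` is maximally monotone with respect to the original
inner product, then `V⁻¹ ∘ M : x ↦ V⁻¹ '' (M x)` is maximally monotone with
respect to the inner product `⟪x, y⟫_V = ⟪x, V y⟫`. -/
theorem Vinv_comp_maximallyMonotone
    {K : Type*} [NormedAddCommGroup K] [InnerProductSpace ℝ K] [CompleteSpace K]
    (V W : K →L[ℝ] K)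
    (hself : ∀ x y : K, ⟪V x, y⟫ = ⟪x, V y⟫)
    (ρ : ℝ) (hρ : 0 < ρ)
    (hpos : ∀ x : K, ρ * ‖x‖ ^ 2 ≤ ⟪x, V x⟫)
    (hWV : ∀ x, W (V x) = x) (hVW : ∀ x, V (W x) = x)
    (M : K → Set K) (hM : MaximallyMonotoneOp M) :
    (∀ x y u v : K, u ∈ W '' (M x) → v ∈ W '' (M y) → 0 ≤ ⟪x - y, V (u - v)⟫) ∧
      (∀ x u : K,
        (∀ y v : K, v ∈ W '' (M y) → 0 ≤ ⟪x - y, V (u - v)⟫) → u ∈ W '' (M x)) := by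
  constructor
  · rintro x y u v ⟨u', hu', rfl⟩ ⟨v', hv', rfl⟩
    have : V (W u' - W v') = u' - v' := by rw [map_sub, hVW, hVW]
    rw [this]
    exact hM.1 x y u' v' hu' hv'
  · intro x u h
    have hVu : V u ∈ M x := by
      apply hM.2
      intro y v hv
      have := h y (W v) ⟨v, hv, rfl⟩
      rwa [map_sub, hVW] at this
    exact ⟨V u, hVu, hWV u⟩
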